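/- The relaxation finite difference scheme for the 1D NLSE conserves the discrete mass: h∑_{j=1}^{J−1} |ψ_j^{n+1}|² = h∑_{j=1}^{J−1} |ψ_j^n|². -/

import Mathlib

/-!
Multiply the scheme at node `j` by the conjugate of `s_j = ψ_j^{n+1} + ψ_j^n` and take imaginary
parts. The time difference contributes `(ε/τ) (|ψ_j^{n+1}|² - |ψ_j^n|²)`, the potential term
`(V_j + u_j) |s_j|²` is real and drops out, and the Laplacian term `Im (conj s_j (D² s)_j)` is a
difference `g (j+1) - g j` with `g j = Im (conj s_{j-1} s_j)`, which telescopes to zero over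
`1 ≤ j ≤ J-1` because `s_0 = s_J = 0`.
-/

open Complex Finset ComplexConjugate

def secondDiff (s : ℕ → ℂ) (j : ℕ) : ℂ := s (j + 1) - 2 * s j + s (j - 1)

theorem re_sub_mul_conj_add (z w : ℂ) : ((z - w) * conj (z + w)).re = ‖z‖ ^ 2 - ‖w‖ ^ 2 := by
  simp only [Complex.sq_norm, normSq_apply, mul_re, sub_re, sub_im, add_re, add_im, conj_re,
    conj_im]
  ring

theorem im_conj_mul_secondDiff (s : ℕ → ℂ) (j : ℕ) :
    (conj (s j) * secondDiff s j).im
      = (conj (s j) * s (j + 1)).im - (conj (s (j - 1)) * s j).im := by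
  simp only [secondDiff, mul_im, mul_re, add_im, sub_im, add_re, sub_re, conj_re, conj_im,
    re_ofNat, im_ofNat]
  ring

theorem im_sum_conj_mul_secondDiff_eq_zero {s : ℕ → ℂ} {J : ℕ} (h0 : s 0 = 0) (hJ : s J = 0) :
    (∑ j ∈ Ico 1 J, conj (s j) * secondDiff s j).im = 0 := by
  rcases Nat.eq_zero_or_pos J with rfl | hJpos
  · simp
  have htelescope := sum_Ico_sub (fun j => (conj (s (j - 1)) * s j).im) hJpos
  simp only [Nat.add_sub_cancel] at htelescope
  rw [im_sum, sum_congr rfl fun j _ => im_conj_mul_secondDiff s j, htelescope]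
  simp [h0, hJ]

theorem mul_sq_norm_sub_sq_norm_of_midpoint_step {κ c r : ℝ} {z w L : ℂ}
    (hstep : I * κ * (z - w) = c * L + r * (z + w)) :
    κ * (‖z‖ ^ 2 - ‖w‖ ^ 2) = c * (conj (z + w) * L).im := by
  have hlhs : (I * κ * (z - w) * conj (z + w)).im = κ * (‖z‖ ^ 2 - ‖w‖ ^ 2) := by
    simp [← re_sub_mul_conj_add, mul_assoc, mul_im, mul_re]
  have hrhs : ((c * L + r * (z + w)) * conj (z + w)).im = c * (conj (z + w) * L).im := by
    rw [add_mul, add_im, mul_assoc, mul_assoc, mul_conj]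
    simp [mul_comm L]
  rw [← hlhs, ← hrhs, hstep]

/-- `a = ψ^n`, `b = ψ^{n+1}`, `u = u^{n+1/2}`. -/
theorem refd_mass_conservation_general
    (ε τ h : ℝ) (hε : 0 < ε) (hτ : 0 < τ)
    (J : ℕ) (V : ℕ → ℝ) (u : ℕ → ℝ) (a b : ℕ → ℂ)
    (ha0 : a 0 = 0) (haJ : a J = 0) (hb0 : b 0 = 0) (hbJ : b J = 0)
    (hscheme : ∀ j, 1 ≤ j → j ≤ J - 1 →
      Complex.I * (ε : ℂ) * (b j - a j) / (τ : ℂ)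
        = -((ε : ℂ) ^ 2 / 4) *
            ((b (j + 1) - 2 * b j + b (j - 1)) / (h : ℂ) ^ 2
              + (a (j + 1) - 2 * a j + a (j - 1)) / (h : ℂ) ^ 2)
          + (1 / 2 : ℂ) * ((V j + u j : ℝ) : ℂ) * (b j + a j)) :
    h * ∑ j ∈ Finset.Ico 1 J, ‖b j‖ ^ 2
      = h * ∑ j ∈ Finset.Ico 1 J, ‖a j‖ ^ 2 := by
  set s : ℕ → ℂ := fun j => b j + a j
  have hpointwise : ∀ j ∈ Ico 1 J, ε / τ * (‖b j‖ ^ 2 - ‖a j‖ ^ 2)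
      = -(ε ^ 2 / 4 / h ^ 2) * (conj (s j) * secondDiff s j).im := by
    intro j hj
    obtain ⟨hj1, hjJ⟩ := mem_Ico.1 hj
    apply mul_sq_norm_sub_sq_norm_of_midpoint_step (r := (V j + u j) / 2)
    linear_combination (norm := (simp only [s, secondDiff]; push_cast; ring))
      hscheme j hj1 (by omega)
  have hsum : ε / τ * ∑ j ∈ Ico 1 J, (‖b j‖ ^ 2 - ‖a j‖ ^ 2) = 0 := by
    rw [mul_sum, sum_congr rfl hpointwise, ← mul_sum, ← im_sum,
      im_sum_conj_mul_secondDiff_eq_zero (by simp [s, ha0, hb0]) (by simp [s, haJ, hbJ]),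
      mul_zero]
  rw [sum_sub_distrib, mul_eq_zero_iff_left (div_pos hε hτ).ne', sub_eq_zero] at hsum
  rw [hsum]

/-- The relaxation finite difference (ReFD) scheme for the 1D NLSE with
homogeneous Dirichlet boundary conditions conserves the discrete mass:
`h ∑_{j=1}^{J−1} |ψ_j^{n+1}|² = h ∑_{j=1}^{J−1} |ψ_j^n|²`.  Here `a = ψ^n`,
`b = ψ^{n+1}`, and `u = u^{n+1/2}` is the real relaxation variable determined
by `(u^{n+1/2}_j + u^{n−1/2}_j)/2 = f(|ψ_j^n|²)`. -/
theorem refd_mass_conservation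
    (ε τ h : ℝ) (hε : 0 < ε) (hτ : 0 < τ) (hh : 0 < h)
    (J : ℕ) (hJ : 2 ≤ J) (V : ℕ → ℝ) (f : ℝ → ℝ)
    (u uprev : ℕ → ℝ)
    (a b : ℕ → ℂ)
    (ha0 : a 0 = 0) (haJ : a J = 0) (hb0 : b 0 = 0) (hbJ : b J = 0)
    (hrelax : ∀ j, 1 ≤ j → j ≤ J - 1 →
      (u j + uprev j) / 2 = f (‖a j‖ ^ 2))
    (hscheme : ∀ j, 1 ≤ j → j ≤ J - 1 →
      Complex.I * (ε : ℂ) * (b j - a j) / (τ : ℂ)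
        = -((ε : ℂ) ^ 2 / 4) *
            ((b (j + 1) - 2 * b j + b (j - 1)) / (h : ℂ) ^ 2
              + (a (j + 1) - 2 * a j + a (j - 1)) / (h : ℂ) ^ 2)
          + (1 / 2 : ℂ) * ((V j + u j : ℝ) : ℂ) * (b j + a j)) :
    h * ∑ j ∈ Finset.Ico 1 J, ‖b j‖ ^ 2
      = h * ∑ j ∈ Finset.Ico 1 J, ‖a j‖ ^ 2 :=
  refd_mass_conservation_general ε τ h hε hτ J V u a b ha0 haJ hb0 hbJ hscheme
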